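/- Let G be a finite group, let K be a Carter subgroup of G, and let z ∈ Z(K) with z ≠ 1. Assume that any two Carter subgroups of C_G(z) are conjugate in C_G(z). Then z is not conjugate in G to any power z^k with z^k ≠ z: for every g ∈ G and every integer k, if g⁻¹zg = z^k then z^k = z. -/

import Mathlib

/-!
Both `K` and its conjugate `g K g⁻¹` lie in `C_G(z)`: the first because `z` is central in `K`,
the second because `g z^k g⁻¹ = z` and `z^k` is central in `K`. Being nilpotent and
self-normalizing already in `G`, both are Carter subgroups of `C_G(z)`, so `c K c⁻¹ = g K g⁻¹` for
some `c` centralizing `z`. Then `g⁻¹ c` normalizes `K`, hence lies in `K` and centralizes `z`;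
so `g = c (g⁻¹ c)⁻¹` centralizes `z`, and `z^k = g⁻¹ z g = z`.
-/

/-- A Carter subgroup of a group `G` is a nilpotent self-normalizing subgroup. -/
def IsCarterSubgroup {G : Type*} [Group G] (K : Subgroup G) : Prop :=
  Group.IsNilpotent K ∧ Subgroup.normalizer (K : Set G) = K

namespace IsCarterSubgroup

variable {G G' : Type*} [Group G] [Group G'] {H : Subgroup G}

theorem map_equiv (hH : IsCarterSubgroup H) (e : G ≃* G') :
    IsCarterSubgroup (H.map e.toMonoidHom) := by
  obtain ⟨hnil, hnorm⟩ := hH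
  refine ⟨Group.nilpotent_of_mulEquiv (H.equivMapOfInjective _ e.injective), ?_⟩
  rw [← Subgroup.map_equiv_normalizer_eq, hnorm]

theorem subgroupOf (hH : IsCarterSubgroup H) {C : Subgroup G} (hle : H ≤ C) :
    IsCarterSubgroup (H.subgroupOf C) := by
  obtain ⟨hnil, hnorm⟩ := hH
  refine ⟨Group.nilpotent_of_mulEquiv (Subgroup.subgroupOfEquivOfLe hle).symm, ?_⟩
  rw [← Subgroup.subgroupOf_normalizer_eq hle, hnorm]

end IsCarterSubgroup

namespace Subgroup

variable {G : Type*} [Group G]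

theorem inv_mul_mem_normalizer_of_map_conj_eq {H : Subgroup G} {a b : G}
    (h : H.map (MulAut.conj a).toMonoidHom = H.map (MulAut.conj b).toMonoidHom) :
    a⁻¹ * b ∈ normalizer (H : Set G) := by
  rw [mem_normalizer_iff_map_conj_eq, map_mul]
  change map ((MulAut.conj a⁻¹).toMonoidHom.comp (MulAut.conj b).toMonoidHom) H = H
  rw [← map_map, ← h, map_map, map_inv]
  convert H.map_id
  ext x
  exact (MulAut.conj a).symm_apply_apply x

theorem map_map_conj_subgroupOf {H C : Subgroup G} (hle : H ≤ C) (c : C) :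
    ((H.subgroupOf C).map (MulAut.conj c).toMonoidHom).map C.subtype =
      H.map (MulAut.conj (c : G)).toMonoidHom := by
  rw [map_map]
  conv_rhs => rw [← map_subgroupOf_eq_of_le hle, map_map]
  rfl

theorem map_conj_centralizer_singleton_le (x g : G) :
    (centralizer {x}).map (MulAut.conj g).toMonoidHom ≤ centralizer {g * x * g⁻¹} := by
  simpa using map_centralizer_le_centralizer_image {x} (MulAut.conj g).toMonoidHom

end Subgroup

theorem not_conjugate_to_power_general {G : Type*} [Group G]
    (K : Subgroup G) (hK : IsCarterSubgroup K)
    (z : G) (hzc : ∀ k ∈ K, z * k = k * z)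
    (hconj : ∀ K₁ K₂ : Subgroup ↥(Subgroup.centralizer {z}),
      IsCarterSubgroup K₁ → IsCarterSubgroup K₂ →
      ∃ g : ↥(Subgroup.centralizer {z}), K₁.map (MulAut.conj g).toMonoidHom = K₂) :
    ∀ (g : G) (k : ℤ), g⁻¹ * z * g = z ^ k → z ^ k = z := by
  intro g k hgk
  have hK_le (n : ℤ) : K ≤ Subgroup.centralizer {z ^ n} := fun y hy ↦
    Subgroup.mem_centralizer_singleton_iff.2 ((Commute.zpow_left (hzc y hy) n).eq.symm)
  have hK_le_C : K ≤ Subgroup.centralizer {z} := by simpa using hK_le 1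
  set L := K.map (MulAut.conj g).toMonoidHom
  have hL_le_C : L ≤ Subgroup.centralizer {z} := by
    have : g * z ^ k * g⁻¹ = z := by rw [← hgk]; group
    exact this ▸ (Subgroup.map_mono (hK_le k)).trans
      (Subgroup.map_conj_centralizer_singleton_le _ _)
  obtain ⟨c, hc⟩ := hconj (K.subgroupOf _) (L.subgroupOf _)
    (hK.subgroupOf hK_le_C) ((hK.map_equiv _).subgroupOf hL_le_C)
  have hcK : K.map (MulAut.conj (c : G)).toMonoidHom = L := by
    rw [← Subgroup.map_map_conj_subgroupOf hK_le_C, hc,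
      Subgroup.map_subgroupOf_eq_of_le hL_le_C]
  have hgc : Commute z (g⁻¹ * c) :=
    hzc _ (hK.2 ▸ Subgroup.inv_mul_mem_normalizer_of_map_conj_eq hcK.symm)
  have hcz : Commute z c := (Subgroup.mem_centralizer_singleton_iff.1 c.2).symm
  have hgz : Commute z g := by
    simpa using (hgc.mul_right hcz.inv_right).inv_right
  rw [← hgk, mul_assoc, hgz.eq, inv_mul_cancel_left]

/-- A nontrivial central element `z` of a Carter subgroup is not conjugate to any
power `z^k ≠ z`, provided Carter subgroups of `C_G(z)` are conjugate. -/
theorem not_conjugate_to_power {G : Type*} [Group G] [Finite G]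
    (K : Subgroup G) (hK : IsCarterSubgroup K)
    (z : G) (hz : z ≠ 1) (hzK : z ∈ K) (hzc : ∀ k ∈ K, z * k = k * z)
    (hconj : ∀ K₁ K₂ : Subgroup ↥(Subgroup.centralizer {z}),
      IsCarterSubgroup K₁ → IsCarterSubgroup K₂ →
      ∃ g : ↥(Subgroup.centralizer {z}), K₁.map (MulAut.conj g).toMonoidHom = K₂) :
    ∀ (g : G) (k : ℤ), g⁻¹ * z * g = z ^ k → z ^ k = z :=
  not_conjugate_to_power_general K hK z hzc hconj
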